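/- Let R be a commutative domain, let f₁,…,f_k, g be elements of R forming a regular sequence (in every order), let I be the ideal of R generated by f₁,…,f_k, and let δ be a derivation on R which maps the subring R[f₁/g,…,f_k/g] of the fraction field of R into itself. Then δ(I) ⊆ I + Rg. -/

import Mathlib

/-!
Every element of `R[f₁/g,…,f_k/g]` becomes, after multiplication by a suitable power `gⁿ`, the
image of an element of `I + (gⁿ)`. Applied to `δ(f/g) = (g δf - f δg)/g²` for a generator `f`
of `I`, this gives `gⁿ (g δf - f δg) ∈ g² (I + (gⁿ))`, hence `gⁿ⁺¹ (δf - r g) ∈ I` for some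
`r ∈ R`. Since `g` is a nonzerodivisor modulo `I`, `δf ∈ I + (g)`; the Leibniz rule passes this
from the generators to all of `I`.
-/

open Ideal

namespace RingTheory.Sequence

variable {R : Type*} [CommRing R] {rs : List R} {g : R}

theorem IsWeaklyRegular.isSMulRegular_quotient_ofList (h : IsWeaklyRegular R (rs ++ [g])) :
    IsSMulRegular (R ⧸ ofList rs) g := by
  have := ((isWeaklyRegular_append_iff R rs [g]).1 h).2
  rwa [isWeaklyRegular_singleton_iff, smul_eq_mul, mul_top] at this

theorem IsRegular.last_ne_zero (h : IsRegular R (rs ++ [g])) : g ≠ 0 := by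
  rintro rfl
  have hsub := h.toIsWeaklyRegular.isSMulRegular_quotient_ofList.subsingleton
  have hnon := h.quot_ofList_smul_nontrivial ⊤
  rw [ofList_append, ofList_singleton, span_singleton_eq_bot.2 rfl, sup_bot_eq, smul_eq_mul,
    mul_top] at hnon
  exact not_nontrivial _ hnon

end RingTheory.Sequence

namespace Ideal

variable {R : Type*} [CommRing R] {I : Ideal R} {g : R}

theorem ofList_ofFn {k : ℕ} (f : Fin k → R) : ofList (List.ofFn f) = span (Set.range f) := by
  simp only [ofList, List.mem_ofFn']
  rfl

theorem sup_span_pow_mul_le (m n : ℕ) :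
    (I ⊔ span {g ^ m}) * (I ⊔ span {g ^ n}) ≤ I ⊔ span {g ^ (m + n)} := by
  rw [Ideal.sup_mul, Ideal.mul_sup, Ideal.mul_sup, span_singleton_mul_span_singleton, ← pow_add]
  exact sup_le (sup_le (mul_le_right.trans le_sup_left) (mul_le_left.trans le_sup_left))
    (sup_le_sup_right mul_le_right _)

theorem mul_mem_sup_span_pow {a b : R} {m n : ℕ} (ha : a ∈ I ⊔ span {g ^ m})
    (hb : b ∈ I ⊔ span {g ^ n}) : a * b ∈ I ⊔ span {g ^ (m + n)} :=
  sup_span_pow_mul_le m n (mul_mem_mul ha hb)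

theorem pow_mem_sup_span_pow (n : ℕ) : g ^ n ∈ I ⊔ span {g ^ n} :=
  mem_sup_right (mem_span_singleton_self _)

theorem mem_sup_span_of_pow_mul_eq (hg : IsSMulRegular (R ⧸ I) g) {c d e f : R} {n : ℕ}
    (hf : f ∈ I) (hc : c ∈ I ⊔ span {g ^ n}) (h : g ^ n * (g * d - f * e) = g ^ 2 * c) :
    d ∈ I ⊔ span {g} := by
  obtain ⟨c₁, hc₁, _, hc₂, rfl⟩ := Submodule.mem_sup.1 hc
  obtain ⟨r, rfl⟩ := mem_span_singleton'.1 hc₂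
  have hdr : g ^ (n + 1) * (d - r * g) ∈ I := by
    have : g ^ (n + 1) * (d - r * g) = g ^ n * e * f + g ^ 2 * c₁ := by linear_combination h
    rw [this]
    exact add_mem (I.mul_mem_left _ hf) (I.mul_mem_left _ hc₁)
  rw [← sub_add_cancel d (r * g)]
  exact add_mem (mem_sup_left (mem_of_isSMulRegular_quotient_of_smul_mem (hg.pow _) hdr))
    (mem_sup_right (mem_span_singleton'.2 ⟨r, rfl⟩))

variable {S : Type*} [CommRing S] [Algebra R S]

variable (S) in
def powDenomSubalgebra (I : Ideal R) (g : R) : Subalgebra R S where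
  carrier := {a | ∃ n, ∃ c ∈ I ⊔ span {g ^ n}, algebraMap R S (g ^ n) * a = algebraMap R S c}
  mul_mem' := by
    rintro a b ⟨m, c, hc, hac⟩ ⟨n, d, hd, hbd⟩
    refine ⟨m + n, c * d, mul_mem_sup_span_pow hc hd, ?_⟩
    rw [pow_add, map_mul, map_mul, ← hac, ← hbd]
    ring
  add_mem' := by
    rintro a b ⟨m, c, hc, hac⟩ ⟨n, d, hd, hbd⟩
    refine ⟨m + n, c * g ^ n + g ^ m * d, add_mem (mul_mem_sup_span_pow hc
      (pow_mem_sup_span_pow n)) (mul_mem_sup_span_pow (pow_mem_sup_span_pow m) hd), ?_⟩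
    rw [pow_add, map_add, map_mul, map_mul, map_mul, ← hac, ← hbd]
    ring
  algebraMap_mem' r := ⟨0, r, by simp [span_singleton_one]⟩

theorem adjoin_le_powDenomSubalgebra {ι : Type*} {f : ι → R} {x : ι → S}
    (hx : ∀ i, algebraMap R S g * x i = algebraMap R S (f i)) :
    Algebra.adjoin R (Set.range x) ≤ (span (Set.range f)).powDenomSubalgebra S g :=
  Algebra.adjoin_le <| Set.range_subset_iff.2 fun i =>
    ⟨1, f i, mem_sup_left (subset_span ⟨i, rfl⟩), by rw [pow_one, hx]⟩

end Ideal

theorem Derivation.sq_smul_apply_of_mul_eq {R A M : Type*} [CommSemiring R] [CommSemiring A]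
    [AddCommGroup M] [Algebra R A] [Module A M] [Module R M] (D : Derivation R A M) {a b x : A}
    (h : b * x = a) : b ^ 2 • D x = b • D a - a • D b := by
  rw [← h, D.leibniz, smul_add, smul_smul, smul_smul, sq, add_sub_cancel_right]

-- `Module A S` is not assumed to come from `Algebra A S`, so that this applies e.g. to
-- `Derivation ℤ K K`, whose `ℤ`-module structure is `AddCommGroup.toIntModule`.
set_option linter.overlappingInstances false in
theorem Derivation.exists_algebraMap_eq_of_mem_span {A R S : Type*} [CommSemiring A] [CommRing R]
    [CommRing S] [Algebra R S] [Algebra A S] [Module A S] (D : Derivation A S S)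
    (hD : ∀ r : R, D (algebraMap R S r) ∈ (algebraMap R S).range) {s : Set R} {J : Ideal R}
    (hsJ : span s ≤ J) (hs : ∀ x ∈ s, ∃ y ∈ J, D (algebraMap R S x) = algebraMap R S y) :
    ∀ x ∈ span s, ∃ y ∈ J, D (algebraMap R S x) = algebraMap R S y := by
  intro x hx
  induction hx using Submodule.span_induction with
  | mem x hx => exact hs x hx
  | zero => exact ⟨0, J.zero_mem, by simp⟩
  | add x y _ _ ihx ihy =>
    obtain ⟨y₁, hy₁, e₁⟩ := ihx
    obtain ⟨y₂, hy₂, e₂⟩ := ihy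
    exact ⟨y₁ + y₂, J.add_mem hy₁ hy₂, by rw [map_add, map_add, e₁, e₂, map_add]⟩
  | smul r x hx ih =>
    obtain ⟨y, hy, ey⟩ := ih
    obtain ⟨e, he⟩ := hD r
    refine ⟨r * y + x * e, J.add_mem (J.mul_mem_left r hy) (J.mul_mem_right e (hsJ hx)), ?_⟩
    rw [smul_eq_mul, map_mul, D.leibniz, ey, ← he, smul_eq_mul, smul_eq_mul, map_add, map_mul,
      map_mul]

/-- Let `R` be a commutative domain with fraction field `K`, let
`f₁,…,f_k, g` form a regular sequence in every order, let `I = (f₁,…,f_k)R`, and let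
`δ` be a derivation of `K` mapping (the image of) `R` into itself and mapping the
subring `R[f₁/g,…,f_k/g] ⊆ K` into itself.  Then `δ(I) ⊆ I + Rg`. -/
theorem stmt_1 {R : Type*} [CommRing R] [IsDomain R] {k : ℕ} (f : Fin k → R) (g : R)
    (hreg : ∀ l : List R, l.Perm (List.ofFn f ++ [g]) →
      RingTheory.Sequence.IsRegular R l)
    (δ : Derivation ℤ (FractionRing R) (FractionRing R))
    (hR : ∀ r : R, δ (algebraMap R (FractionRing R) r) ∈ (algebraMap R (FractionRing R)).range)
    (hA : ∀ x ∈ Algebra.adjoin R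
        (Set.range fun i => algebraMap R (FractionRing R) (f i) / algebraMap R (FractionRing R) g),
      δ x ∈ Algebra.adjoin R
        (Set.range fun i => algebraMap R (FractionRing R) (f i) / algebraMap R (FractionRing R) g)) :
    ∀ x ∈ Ideal.span (Set.range f),
      ∃ y ∈ Ideal.span (Set.range f) ⊔ Ideal.span {g},
        δ (algebraMap R (FractionRing R) x) = algebraMap R (FractionRing R) y := by
  refine δ.exists_algebraMap_eq_of_mem_span hR le_sup_left ?_
  set φ := algebraMap R (FractionRing R)
  have hφ : Function.Injective φ := IsFractionRing.injective R _
  have hseq := hreg _ (List.Perm.refl _)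
  have hg : IsSMulRegular (R ⧸ span (Set.range f)) g := by
    rw [← ofList_ofFn]
    exact hseq.toIsWeaklyRegular.isSMulRegular_quotient_ofList
  have hfg (i : Fin k) : φ g * (φ (f i) / φ g) = φ (f i) :=
    mul_div_cancel₀ _ ((map_ne_zero_iff φ hφ).2 hseq.last_ne_zero)
  rintro _ ⟨i, rfl⟩
  obtain ⟨d, hd⟩ := hR (f i)
  obtain ⟨e, he⟩ := hR g
  obtain ⟨n, c, hc, hnc⟩ := adjoin_le_powDenomSubalgebra hfg (hA _ (Algebra.subset_adjoin ⟨i, rfl⟩))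
  have key : g ^ n * (g * d - f i * e) = g ^ 2 * c := by
    apply hφ
    have hquot := δ.sq_smul_apply_of_mul_eq (hfg i)
    simp only [smul_eq_mul, map_mul, map_sub, map_pow] at hquot hnc ⊢
    rw [hd, he]
    linear_combination -φ g ^ n * hquot + φ g ^ 2 * hnc
  exact ⟨d, mem_sup_span_of_pow_mul_eq hg (subset_span ⟨i, rfl⟩) hc key, hd.symm⟩
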